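/- Assume (H_a), (H_B) and (H_2). Let w^in ∈ Y_1^+, w^in ≢ 0, and ρ1 ≥ ρ0 > 0 with M_1(w^in) ≤ ρ1 and M_0(w^in) ≥ ρ0. Let l_0 ≥ 1 be such that Σ_{i=l_0+1}^∞ w_i^in ≤ M_0(w^in)/2, and set δ_0 = min{ρ0/2, (ρ0/2)^{1−α} ρ1^{α}}. For l ≥ l_0 let w^l be a mass-conserving solution on [0,∞) of the truncated equation (with kernel a^l and initial condition w^{in,l}) belonging to L^∞_loc([0,∞); Y_m) for all m > 1. Then for all t ≥ 0 and l ≥ l_0: M_1(w^l(t)) = M_1(w^{in,l}) ≤ ρ1, M_0(w^l(t)) ≥ M_0(w^{in,l}) ≥ ρ0/2, and M_α(w^l(t)) ≥ δ_0 > 0. -/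

import Mathlib

open MeasureTheory

/-- The moment of order `γ` of a sequence `y = (y_i)_{i ≥ 1}`. -/
noncomputable def mom (γ : ℝ) (y : ℕ → ℝ) : ℝ :=
  ∑' n : ℕ, ((n + 1 : ℕ) : ℝ) ^ γ * y (n + 1)

/-- Membership in the space `Y_γ`. -/
def inY (γ : ℝ) (y : ℕ → ℝ) : Prop :=
  Summable fun n : ℕ => ((n + 1 : ℕ) : ℝ) ^ γ * |y (n + 1)|

/-- The gain term `(1/2) Σ_{j=i+1}^∞ Σ_{k=1}^{j-1} B_{j-k,k}^i a_{j-k,k} w_{j-k} w_k`. -/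
noncomputable def gainT (a : ℕ → ℕ → ℝ) (B : ℕ → ℕ → ℕ → ℝ)
    (w : ℕ → ℝ → ℝ) (i : ℕ) (τ : ℝ) : ℝ :=
  (1 / 2) * ∑' n : ℕ, ∑ k ∈ Finset.Ico 1 (i + 1 + n),
    B (i + 1 + n - k) k i * a (i + 1 + n - k) k * w (i + 1 + n - k) τ * w k τ

/-- The loss term `Σ_{j=1}^∞ a_{i,j} w_i w_j`. -/
noncomputable def lossT (a : ℕ → ℕ → ℝ) (w : ℕ → ℝ → ℝ) (i : ℕ) (τ : ℝ) : ℝ :=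
  ∑' n : ℕ, a i (n + 1) * w i τ * w (n + 1) τ

/-- A solution on `[0,∞)` of the discrete collision-induced breakage equation with
kernel `a`, daughter distribution `B` and initial condition `win`. -/
def IsSol (a : ℕ → ℕ → ℝ) (B : ℕ → ℕ → ℕ → ℝ) (win : ℕ → ℝ)
    (w : ℕ → ℝ → ℝ) : Prop :=
  (∀ i, 1 ≤ i → ∀ t : ℝ, 0 ≤ t → 0 ≤ w i t) ∧
  (∀ i, 1 ≤ i → ContinuousOn (w i) (Set.Ici (0 : ℝ))) ∧
  (∀ i, 1 ≤ i → w i 0 = win i) ∧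
  (∀ i, 1 ≤ i → ∀ t : ℝ, 0 < t →
    IntegrableOn (lossT a w i) (Set.Ioc 0 t) ∧
    IntegrableOn (gainT a B w i) (Set.Ioc 0 t) ∧
    w i t = win i + ∫ τ in Set.Ioc (0 : ℝ) t, (gainT a B w i τ - lossT a w i τ))

/-- Mass conservation: `M_1(w(t)) = M_1(w^in)` for all `t ≥ 0`. -/
def MassConserving (win : ℕ → ℝ) (w : ℕ → ℝ → ℝ) : Prop :=
  ∀ t : ℝ, 0 ≤ t → inY 1 (fun i => w i t) ∧ mom 1 (fun i => w i t) = mom 1 win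

/-- Hypothesis (H_B) on the daughter distribution function. -/
def HB (B : ℕ → ℕ → ℕ → ℝ) : Prop :=
  ∀ j k : ℕ, 1 ≤ j → 1 ≤ k →
    (∀ i, 0 ≤ B j k i) ∧ (∀ i, B j k i = B k j i) ∧
    (∀ i, j + k ≤ i → B j k i = 0) ∧
    (∑ i ∈ Finset.Ico 1 (j + k), (i : ℝ) * B j k i = (j : ℝ) + (k : ℝ))

/-- Hypothesis (H_m): moment damping at every order `m > 1`. -/
def Hmom (B : ℕ → ℕ → ℕ → ℝ) : Prop :=
  ∀ m : ℝ, 1 < m → ∃ ε κ : ℝ, 0 < ε ∧ ε < 1 ∧ 1 ≤ κ ∧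
    ∀ j k : ℕ, 1 ≤ j → 1 ≤ k →
      ∑ i ∈ Finset.Ico 1 (j + k), (i : ℝ) ^ m * B j k i ≤
        (1 - ε) * ((j : ℝ) ^ m + (k : ℝ) ^ m) +
          κ * ((j : ℝ) * (k : ℝ) ^ (m - 1) + (j : ℝ) ^ (m - 1) * (k : ℝ))

/-- Hypothesis (H_2): at least two fragments in each collision. -/
def H2 (B : ℕ → ℕ → ℕ → ℝ) : Prop :=
  ∀ j k : ℕ, 1 ≤ j → 1 ≤ k → 2 ≤ ∑ i ∈ Finset.Ico 1 (j + k), B j k i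

/-- The collision kernel `a_{i,j} = A (i^α j^β + i^β j^α)`. -/
noncomputable def kerA (A α β : ℝ) (i j : ℕ) : ℝ :=
  A * ((i : ℝ) ^ α * (j : ℝ) ^ β + (i : ℝ) ^ β * (j : ℝ) ^ α)

/-- The truncated collision kernel
`a^l_{i,j} = A (min{i,l}^{α₊} i^{α-α₊} j^β + i^β min{j,l}^{α₊} j^{α-α₊})`. -/
noncomputable def kerTrunc (A α β : ℝ) (l : ℕ) (i j : ℕ) : ℝ :=
  A * (((min i l : ℕ) : ℝ) ^ max α 0 * (i : ℝ) ^ (α - max α 0) * (j : ℝ) ^ β +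
       (i : ℝ) ^ β * ((min j l : ℕ) : ℝ) ^ max α 0 * (j : ℝ) ^ (α - max α 0))

/-- The truncated initial condition `w^{in,l}`. -/
def winTrunc (l : ℕ) (win : ℕ → ℝ) (i : ℕ) : ℝ := if i ≤ l then win i else 0

/-- `w ∈ L^∞_loc([0,∞); Y_m)` for every `m > 1`. -/
def LocBddMoments (w : ℕ → ℝ → ℝ) : Prop :=
  ∀ m : ℝ, 1 < m → ∀ T : ℝ, 0 < T → ∃ C : ℝ,
    ∀ t ∈ Set.Icc (0 : ℝ) T, inY m (fun i => w i t) ∧ mom m (fun i => w i t) ≤ C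

/-- `sup_{t ∈ [0,T]} M_γ(w(t)) < ∞` for each `T > 0`. -/
def BddMoment (γ : ℝ) (w : ℕ → ℝ → ℝ) : Prop :=
  ∀ T : ℝ, 0 < T → ∃ C : ℝ,
    ∀ t ∈ Set.Icc (0 : ℝ) T, inY γ (fun i => w i t) ∧ mom γ (fun i => w i t) ≤ C

/-- A stationary solution of the discrete collision-induced breakage equation. -/
def IsStationarySol (a : ℕ → ℕ → ℝ) (B : ℕ → ℕ → ℕ → ℝ) (w : ℕ → ℝ) : Prop :=
  ∀ i, 1 ≤ i →
    Summable (fun n : ℕ => ∑ k ∈ Finset.Ico 1 (i + 1 + n),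
      B (i + 1 + n - k) k i * a (i + 1 + n - k) k * w (i + 1 + n - k) * w k) ∧
    Summable (fun n : ℕ => a i (n + 1) * w i * w (n + 1)) ∧
    (1 / 2) * (∑' n : ℕ, ∑ k ∈ Finset.Ico 1 (i + 1 + n),
        B (i + 1 + n - k) k i * a (i + 1 + n - k) k * w (i + 1 + n - k) * w k) =
      ∑' n : ℕ, a i (n + 1) * w i * w (n + 1)

/-! Mass is conserved by assumption, and truncating the initial datum only removes mass.
The number of particles `M_0` cannot decrease: summed over all sizes, a collision of `j` and
`k` destroys two particles and creates `Σ_i B^i_{j,k} ≥ 2`; all series involved converge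
(so that sums and time integrals may be exchanged in `ℝ≥0∞`) because the truncated kernel grows
at most like `i j` and the second moment is locally bounded. Finally, for `α < 0` Hölder's
inequality interpolates `M_0` between `M_α` and `M_1`, which gives
`M_α ≥ M_0^(1-α) M_1^α`; for `α ≥ 0` simply `M_α ≥ M_0`. -/

open scoped ENNReal
open Finset.HasAntidiagonal

lemma mom_zero_eq_tsum (y : ℕ → ℝ) : mom 0 y = ∑' n : ℕ, y (n + 1) := by
  simp only [mom, Real.rpow_zero, one_mul]

lemma inY_iff_summable {γ : ℝ} {y : ℕ → ℝ} (hy : ∀ n : ℕ, 0 ≤ y (n + 1)) :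
    inY γ y ↔ Summable fun n : ℕ => ((n + 1 : ℕ) : ℝ) ^ γ * y (n + 1) := by
  simp only [inY, abs_of_nonneg (hy _)]

lemma natCast_succ_rpow_le_rpow (n : ℕ) {γ γ' : ℝ} (hγ : γ ≤ γ') :
    ((n + 1 : ℕ) : ℝ) ^ γ ≤ ((n + 1 : ℕ) : ℝ) ^ γ' :=
  Real.rpow_le_rpow_of_exponent_le (by simp) hγ

lemma summable_mom_of_le {γ γ' : ℝ} (hγ : γ ≤ γ') {y : ℕ → ℝ} (hy : ∀ n : ℕ, 0 ≤ y (n + 1))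
    (h : Summable fun n : ℕ => ((n + 1 : ℕ) : ℝ) ^ γ' * y (n + 1)) :
    Summable fun n : ℕ => ((n + 1 : ℕ) : ℝ) ^ γ * y (n + 1) :=
  h.of_nonneg_of_le (fun n => mul_nonneg (by positivity) (hy n))
    fun n => mul_le_mul_of_nonneg_right (natCast_succ_rpow_le_rpow n hγ) (hy n)

lemma summable_succ_of_summable_mom_one {y : ℕ → ℝ} (hy : ∀ n : ℕ, 0 ≤ y (n + 1))
    (h : Summable fun n : ℕ => ((n + 1 : ℕ) : ℝ) ^ (1 : ℝ) * y (n + 1)) :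
    Summable fun n : ℕ => y (n + 1) :=
  (summable_mom_of_le zero_le_one hy h).congr fun n => by rw [Real.rpow_zero, one_mul]

lemma mom_le_mom_of_le {γ γ' : ℝ} (hγ : γ ≤ γ') {y : ℕ → ℝ} (hy : ∀ n : ℕ, 0 ≤ y (n + 1))
    (h : Summable fun n : ℕ => ((n + 1 : ℕ) : ℝ) ^ γ' * y (n + 1)) :
    mom γ y ≤ mom γ' y :=
  (summable_mom_of_le hγ hy h).tsum_le_tsum
    (fun n => mul_le_mul_of_nonneg_right (natCast_succ_rpow_le_rpow n hγ) (hy n)) h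

lemma mom_nonneg (γ : ℝ) {y : ℕ → ℝ} (hy : ∀ n : ℕ, 0 ≤ y (n + 1)) : 0 ≤ mom γ y :=
  tsum_nonneg fun n => mul_nonneg (by positivity) (hy n)

lemma ofReal_mom_zero_eq {y : ℕ → ℝ} (hy : ∀ n : ℕ, 0 ≤ y (n + 1))
    (h1 : Summable fun n : ℕ => ((n + 1 : ℕ) : ℝ) ^ (1 : ℝ) * y (n + 1)) :
    ENNReal.ofReal (mom 0 y) = ∑' n, ENNReal.ofReal (y (n + 1)) := by
  rw [mom_zero_eq_tsum]
  exact ENNReal.ofReal_tsum_of_nonneg hy (summable_succ_of_summable_mom_one hy h1)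

lemma rpow_mul_inv_mul_rpow_mul_inv_eq {x y α β p q : ℝ} (hx : 0 < x) (hy : 0 ≤ y)
    (hpq : p.HolderConjugate q) (hexp : α * p⁻¹ + β * q⁻¹ = 0) :
    (x ^ α * y) ^ p⁻¹ * (x ^ β * y) ^ q⁻¹ = y := by
  rcases hy.eq_or_lt with rfl | hy
  · rw [mul_zero, Real.zero_rpow (inv_ne_zero hpq.ne_zero), zero_mul]
  rw [Real.mul_rpow (by positivity) hy.le, Real.mul_rpow (by positivity) hy.le,
    ← Real.rpow_mul hx.le, ← Real.rpow_mul hx.le, mul_mul_mul_comm, ← Real.rpow_add hx,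
    ← Real.rpow_add hy, hexp, hpq.inv_add_inv_eq_one, Real.rpow_zero, one_mul, Real.rpow_one]

/-- Hölder's inequality with exponents `1 - α` and `(1 - α) / (-α)`, applied to
`y_i = (i^α y_i)^(1/(1-α)) (i y_i)^(-α/(1-α))`. -/
lemma mom_zero_rpow_le_of_neg {α : ℝ} (hα : α < 0) {y : ℕ → ℝ} (hy : ∀ n : ℕ, 0 ≤ y (n + 1))
    (h1 : Summable fun n : ℕ => ((n + 1 : ℕ) : ℝ) ^ (1 : ℝ) * y (n + 1)) :
    mom 0 y ^ (1 - α) ≤ mom α y * mom 1 y ^ (-α) := by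
  set p : ℝ := 1 - α
  set q : ℝ := p / (-α)
  have hp : 0 < p := by linarith
  have hpq : p.HolderConjugate q := by
    refine Real.holderConjugate_iff.mpr ⟨by linarith, ?_⟩
    rw [inv_div, inv_eq_one_div, ← add_div, div_eq_one_iff_eq hp.ne']
    ring
  have hterm : ∀ γ : ℝ, ∀ n : ℕ, 0 ≤ ((n + 1 : ℕ) : ℝ) ^ γ * y (n + 1) :=
    fun γ n => mul_nonneg (by positivity) (hy n)
  set F : ℕ → ℝ := fun n => (((n + 1 : ℕ) : ℝ) ^ α * y (n + 1)) ^ p⁻¹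
  set G : ℕ → ℝ := fun n => (((n + 1 : ℕ) : ℝ) ^ (1 : ℝ) * y (n + 1)) ^ q⁻¹
  have hFp : ∀ n, F n ^ p = ((n + 1 : ℕ) : ℝ) ^ α * y (n + 1) :=
    fun n => Real.rpow_inv_rpow (hterm α n) hpq.ne_zero
  have hGq : ∀ n, G n ^ q = ((n + 1 : ℕ) : ℝ) ^ (1 : ℝ) * y (n + 1) :=
    fun n => Real.rpow_inv_rpow (hterm 1 n) hpq.symm.ne_zero
  have hexp : α * p⁻¹ + 1 * q⁻¹ = 0 := by
    simp only [p, q, inv_div]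
    field_simp
    ring
  have hFG : ∀ n, F n * G n = y (n + 1) := fun n =>
    rpow_mul_inv_mul_rpow_mul_inv_eq (by positivity) (hy n) hpq hexp
  have holder := Real.inner_le_Lp_mul_Lq_tsum_of_nonneg hpq
    (fun n => Real.rpow_nonneg (hterm α n) _) (fun n => Real.rpow_nonneg (hterm 1 n) _)
    ((summable_mom_of_le (hα.le.trans zero_le_one) hy h1).congr fun n => (hFp n).symm)
    (h1.congr fun n => (hGq n).symm)
  have hM0 : ∑' n, F n * G n = mom 0 y := by rw [mom_zero_eq_tsum]; exact tsum_congr hFG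
  have hMα : ∑' n, F n ^ p = mom α y := tsum_congr hFp
  have hM1 : ∑' n, G n ^ q = mom 1 y := tsum_congr hGq
  rw [hM0, hMα, hM1] at holder
  have hMα0 := mom_nonneg α hy
  have hM10 := mom_nonneg 1 hy
  calc mom 0 y ^ p ≤ (mom α y ^ (1 / p) * mom 1 y ^ (1 / q)) ^ p :=
        Real.rpow_le_rpow (mom_nonneg 0 hy) holder hp.le
    _ = mom α y * mom 1 y ^ (-α) := by
        rw [Real.mul_rpow (by positivity) (by positivity), ← Real.rpow_mul hMα0,
          ← Real.rpow_mul hM10, one_div_mul_cancel hp.ne', Real.rpow_one]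
        congr 2
        simp only [q]
        field_simp

lemma min_le_mom_of_lt_one {α : ℝ} (hα : α < 1) {y : ℕ → ℝ} (hy : ∀ n : ℕ, 0 ≤ y (n + 1))
    (h1 : Summable fun n : ℕ => ((n + 1 : ℕ) : ℝ) ^ (1 : ℝ) * y (n + 1))
    {ρ₀ ρ₁ : ℝ} (hρ₀ : 0 < ρ₀) (hM0 : ρ₀ ≤ mom 0 y) (hM1 : mom 1 y ≤ ρ₁) :
    min ρ₀ (ρ₀ ^ (1 - α) * ρ₁ ^ α) ≤ mom α y := by
  rcases le_or_gt 0 α with hα0 | hα0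
  · exact (min_le_left _ _).trans
      (hM0.trans (mom_le_mom_of_le hα0 hy (summable_mom_of_le hα.le hy h1)))
  refine (min_le_right _ _).trans ?_
  have hM1pos : 0 < mom 1 y := hρ₀.trans_le (hM0.trans (mom_le_mom_of_le zero_le_one hy h1))
  calc ρ₀ ^ (1 - α) * ρ₁ ^ α ≤ ρ₀ ^ (1 - α) * mom 1 y ^ α := by
        gcongr ?_ * ?_
        exact Real.rpow_le_rpow_of_nonpos hM1pos hM1 hα0.le
    _ ≤ mom 0 y ^ (1 - α) * mom 1 y ^ α := by gcongr
    _ ≤ mom α y * mom 1 y ^ (-α) * mom 1 y ^ α := by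
        gcongr
        exact mom_zero_rpow_le_of_neg hα0 hy h1
    _ = mom α y := by
        rw [mul_assoc, ← Real.rpow_add hM1pos, neg_add_cancel, Real.rpow_zero, mul_one]

section Truncation

variable {l : ℕ} {win : ℕ → ℝ}

lemma winTrunc_succ_eq_zero {n : ℕ} (h : l ≤ n) : winTrunc l win (n + 1) = 0 :=
  if_neg (by omega)

lemma winTrunc_succ_le (hpos : ∀ i, 1 ≤ i → 0 ≤ win i) (n : ℕ) :
    winTrunc l win (n + 1) ≤ win (n + 1) := by
  unfold winTrunc; split_ifs
  exacts [le_rfl, hpos _ n.succ_pos]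

lemma summable_mom_winTrunc (γ : ℝ) :
    Summable fun n : ℕ => ((n + 1 : ℕ) : ℝ) ^ γ * winTrunc l win (n + 1) :=
  summable_of_ne_finset_zero (s := Finset.range l) fun n hn => by
    rw [winTrunc_succ_eq_zero (by simpa using hn), mul_zero]

lemma mom_one_winTrunc_le (hpos : ∀ i, 1 ≤ i → 0 ≤ win i) (hY1 : inY 1 win) :
    mom 1 (winTrunc l win) ≤ mom 1 win :=
  (summable_mom_winTrunc 1).tsum_le_tsum
    (fun n => mul_le_mul_of_nonneg_left (winTrunc_succ_le hpos n) (by positivity))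
    ((inY_iff_summable fun n => hpos _ n.succ_pos).mp hY1)

lemma mom_zero_winTrunc_eq : mom 0 (winTrunc l win) = ∑ n ∈ Finset.range l, win (n + 1) := by
  rw [mom_zero_eq_tsum,
    tsum_eq_sum (s := Finset.range l) fun n hn => winTrunc_succ_eq_zero (by simpa using hn)]
  exact Finset.sum_congr rfl fun n hn => if_pos (by simp at hn; omega)

lemma half_mom_zero_le_mom_zero_winTrunc (hpos : ∀ i, 1 ≤ i → 0 ≤ win i)
    (h0 : Summable fun n : ℕ => win (n + 1)) {l₀ : ℕ} (hl : l₀ ≤ l)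
    (htail : ∑' n : ℕ, win (l₀ + 1 + n) ≤ mom 0 win / 2) :
    mom 0 win / 2 ≤ mom 0 (winTrunc l win) := by
  have hsplit : ∑ n ∈ Finset.range l₀, win (n + 1) + ∑' n : ℕ, win (l₀ + 1 + n) = mom 0 win := by
    rw [mom_zero_eq_tsum, ← h0.sum_add_tsum_nat_add l₀]
    exact congrArg _ (tsum_congr fun n => congrArg win (by omega))
  have hmono : ∑ n ∈ Finset.range l₀, win (n + 1) ≤ ∑ n ∈ Finset.range l, win (n + 1) :=
    Finset.sum_le_sum_of_subset_of_nonneg (Finset.range_mono hl)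
      fun n _ _ => hpos _ n.succ_pos
  rw [mom_zero_winTrunc_eq]
  linarith

end Truncation

lemma kerTrunc_nonneg {A : ℝ} (hA : 0 ≤ A) (α β : ℝ) (l i j : ℕ) : 0 ≤ kerTrunc A α β l i j := by
  unfold kerTrunc; positivity

lemma kerTrunc_le {A β : ℝ} (hA : 0 ≤ A) (hβ : β ≤ 1) (α : ℝ) (l : ℕ) {i j : ℕ}
    (hi : 1 ≤ i) (hj : 1 ≤ j) :
    kerTrunc A α β l i j ≤ 2 * A * (l : ℝ) ^ max α 0 * i * j := by
  have hi' : (1 : ℝ) ≤ i := by exact_mod_cast hi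
  have hj' : (1 : ℝ) ≤ j := by exact_mod_cast hj
  have hneg : ∀ x : ℝ, 1 ≤ x → x ^ (α - max α 0) ≤ 1 := fun x hx =>
    Real.rpow_le_one_of_one_le_of_nonpos hx (by linarith [le_max_left α 0])
  have hsub : ∀ x : ℝ, 1 ≤ x → x ^ β ≤ x := fun x hx => by
    simpa using Real.rpow_le_rpow_of_exponent_le hx hβ
  have e1 : ((min i l : ℕ) : ℝ) ^ max α 0 * (i : ℝ) ^ (α - max α 0) * (j : ℝ) ^ β ≤
      (l : ℝ) ^ max α 0 * i * j := by
    calc _ ≤ (l : ℝ) ^ max α 0 * 1 * j := by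
          gcongr
          exacts [min_le_right i l, hneg i hi', hsub j hj']
      _ ≤ _ := by gcongr
  have e2 : (i : ℝ) ^ β * ((min j l : ℕ) : ℝ) ^ max α 0 * (j : ℝ) ^ (α - max α 0) ≤
      (l : ℝ) ^ max α 0 * i * j := by
    calc _ ≤ (i : ℝ) * (l : ℝ) ^ max α 0 * 1 := by
          gcongr
          exacts [hsub i hi', min_le_right j l, hneg j hj']
      _ ≤ _ := by
          have : 0 ≤ (i : ℝ) * (l : ℝ) ^ max α 0 := by positivity
          nlinarith
  unfold kerTrunc
  nlinarith

lemma ofReal_tsum_of_nonneg_of_ne_top {ι : Type*} {f : ι → ℝ} (hf : ∀ n, 0 ≤ f n)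
    (h : ∑' n, ENNReal.ofReal (f n) ≠ ∞) :
    ENNReal.ofReal (∑' n, f n) = ∑' n, ENNReal.ofReal (f n) :=
  ENNReal.ofReal_tsum_of_nonneg hf
    ((ENNReal.summable_toReal h).congr fun n => ENNReal.toReal_ofReal (hf n))

lemma sum_Ico_one_eq_sum_antidiagonal {M : Type*} [AddCommMonoid M] (f : ℕ → ℕ → M) (N : ℕ) :
    ∑ k ∈ Finset.Ico 1 (N + 2), f (N + 2 - k) k =
      ∑ p ∈ antidiagonal N, f (p.1 + 1) (p.2 + 1) := by
  rw [← Finset.Nat.sum_antidiagonal_swap, Finset.Nat.sum_antidiagonal_eq_sum_range_succ_mk,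
    Finset.sum_Ico_eq_sum_range]
  refine Finset.sum_congr rfl fun k hk => ?_
  simp only [Finset.mem_range] at hk
  simp only [Prod.swap]
  congr 1 <;> omega

lemma tsum_sum_antidiagonal_add (m : ℕ) (h : ℕ × ℕ → ℝ≥0∞)
    (hh : ∀ p : ℕ × ℕ, p.1 + p.2 < m → h p = 0) :
    ∑' n, ∑ p ∈ antidiagonal (n + m), h p = ∑' p, h p := by
  have hsigma : ∑' p, h p = ∑' s, ∑ p ∈ antidiagonal s, h p := by
    rw [← Finset.HasAntidiagonal.sigmaAntidiagonalEquivProd.tsum_eq, ENNReal.tsum_sigma']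
    exact tsum_congr fun s => Finset.tsum_subtype _ h
  rw [hsigma, ← ENNReal.summable.sum_add_tsum_nat_add'
    (f := fun s => ∑ p ∈ antidiagonal s, h p) (k := m), Finset.sum_eq_zero, zero_add]
  intro s hs
  exact Finset.sum_eq_zero fun p hp => hh p (by simp at hs hp; omega)

section Fragmentation

variable {B : ℕ → ℕ → ℕ → ℝ}

lemma HB.tsum_ofReal_eq (hB : HB B) (j k : ℕ) :
    ∑' m, ENNReal.ofReal (B (j + 1) (k + 1) (m + 1)) =
      ENNReal.ofReal (∑ i ∈ Finset.Ico 1 (j + 1 + (k + 1)), B (j + 1) (k + 1) i) := by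
  obtain ⟨hB0, -, hBvan, -⟩ := hB (j + 1) (k + 1) (by omega) (by omega)
  rw [tsum_eq_sum (s := Finset.range (j + k + 1)) fun m hm => by
      rw [hBvan (m + 1) (by simp at hm; omega), ENNReal.ofReal_zero],
    ← ENNReal.ofReal_sum_of_nonneg fun i _ => hB0 _, Finset.sum_Ico_eq_sum_range]
  exact congrArg _ (Finset.sum_congr (by congr 1; omega) fun i _ => by rw [add_comm 1 i])

lemma HB.tsum_ofReal_le (hB : HB B) (j k : ℕ) :
    ∑' m, ENNReal.ofReal (B (j + 1) (k + 1) (m + 1)) ≤ ((j + k + 2 : ℕ) : ℝ≥0∞) := by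
  obtain ⟨hB0, -, -, hBmass⟩ := hB (j + 1) (k + 1) (by omega) (by omega)
  rw [hB.tsum_ofReal_eq, ← ENNReal.ofReal_natCast]
  refine ENNReal.ofReal_le_ofReal ?_
  calc ∑ i ∈ Finset.Ico 1 (j + 1 + (k + 1)), B (j + 1) (k + 1) i
      ≤ ∑ i ∈ Finset.Ico 1 (j + 1 + (k + 1)), (i : ℝ) * B (j + 1) (k + 1) i :=
        Finset.sum_le_sum fun i hi => le_mul_of_one_le_left (hB0 i)
          (by exact_mod_cast (Finset.mem_Ico.mp hi).1)
    _ = ((j + k + 2 : ℕ) : ℝ) := by rw [hBmass]; push_cast; ring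

lemma H2.two_le_tsum_ofReal (h2 : H2 B) (hB : HB B) (j k : ℕ) :
    2 ≤ ∑' m, ENNReal.ofReal (B (j + 1) (k + 1) (m + 1)) := by
  rw [hB.tsum_ofReal_eq, ← ENNReal.ofReal_ofNat]
  exact ENNReal.ofReal_le_ofReal (h2 (j + 1) (k + 1) (by omega) (by omega))

end Fragmentation

/-- The collision rate `a_{j,k} w_j(τ) w_k(τ)`, indexed by `p = (j - 1, k - 1)`. -/
noncomputable def collRate (a : ℕ → ℕ → ℝ) (w : ℕ → ℝ → ℝ) (τ : ℝ) (p : ℕ × ℕ) : ℝ≥0∞ :=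
  ENNReal.ofReal (a (p.1 + 1) (p.2 + 1) * w (p.1 + 1) τ * w (p.2 + 1) τ)

section CollisionBalance

variable {a : ℕ → ℕ → ℝ} {B : ℕ → ℕ → ℕ → ℝ} {w : ℕ → ℝ → ℝ} {τ : ℝ}

lemma lossT_nonneg (hw : ∀ n : ℕ, 0 ≤ w (n + 1) τ) (ha : ∀ i j, 0 ≤ a i j) (m : ℕ) :
    0 ≤ lossT a w (m + 1) τ :=
  tsum_nonneg fun n => mul_nonneg (mul_nonneg (ha _ _) (hw m)) (hw n)

lemma gain_summand_nonneg (hw : ∀ n : ℕ, 0 ≤ w (n + 1) τ) (ha : ∀ i j, 0 ≤ a i j)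
    (hB : HB B) (i : ℕ) {j k : ℕ} (hj : 1 ≤ j) (hk : 1 ≤ k) :
    0 ≤ B j k i * a j k * w j τ * w k τ := by
  obtain ⟨j, rfl⟩ := Nat.exists_eq_add_of_le' hj
  obtain ⟨k, rfl⟩ := Nat.exists_eq_add_of_le' hk
  exact mul_nonneg (mul_nonneg (mul_nonneg ((hB _ _ hj hk).1 _) (ha _ _)) (hw j)) (hw k)

lemma gainT_summand_nonneg (hw : ∀ n : ℕ, 0 ≤ w (n + 1) τ) (ha : ∀ i j, 0 ≤ a i j)
    (hB : HB B) (i n : ℕ) :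
    0 ≤ ∑ k ∈ Finset.Ico 1 (i + 1 + n),
      B (i + 1 + n - k) k i * a (i + 1 + n - k) k * w (i + 1 + n - k) τ * w k τ :=
  Finset.sum_nonneg fun k hk =>
    gain_summand_nonneg hw ha hB i (by simp at hk; omega) (Finset.mem_Ico.mp hk).1

lemma gainT_nonneg (hw : ∀ n : ℕ, 0 ≤ w (n + 1) τ) (ha : ∀ i j, 0 ≤ a i j) (hB : HB B)
    (i : ℕ) : 0 ≤ gainT a B w i τ :=
  mul_nonneg (by norm_num) (tsum_nonneg (gainT_summand_nonneg hw ha hB i))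

lemma ofReal_lossT_eq (hw : ∀ n : ℕ, 0 ≤ w (n + 1) τ) (ha : ∀ i j, 0 ≤ a i j) (m : ℕ)
    (hfin : ∑' n, collRate a w τ (m, n) ≠ ∞) :
    ENNReal.ofReal (lossT a w (m + 1) τ) = ∑' n, collRate a w τ (m, n) :=
  ofReal_tsum_of_nonneg_of_ne_top (fun n => mul_nonneg (mul_nonneg (ha _ _) (hw m)) (hw n)) hfin

lemma two_mul_ofReal_gainT_eq (hw : ∀ n : ℕ, 0 ≤ w (n + 1) τ) (ha : ∀ i j, 0 ≤ a i j)
    (hB : HB B) (m : ℕ)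
    (hfin : ∑' p, ENNReal.ofReal (B (p.1 + 1) (p.2 + 1) (m + 1)) * collRate a w τ p ≠ ∞) :
    2 * ENNReal.ofReal (gainT a B w (m + 1) τ) =
      ∑' p, ENNReal.ofReal (B (p.1 + 1) (p.2 + 1) (m + 1)) * collRate a w τ p := by
  set f : ℕ → ℕ → ℝ := fun j k => B j k (m + 1) * a j k * w j τ * w k τ
  have hterm : ∀ n, ENNReal.ofReal (∑ k ∈ Finset.Ico 1 (m + 1 + 1 + n), f (m + 1 + 1 + n - k) k) =
      ∑ p ∈ antidiagonal (n + m), ENNReal.ofReal (B (p.1 + 1) (p.2 + 1) (m + 1)) *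
        collRate a w τ p := by
    intro n
    rw [show m + 1 + 1 + n = n + m + 2 by omega, sum_Ico_one_eq_sum_antidiagonal,
      ENNReal.ofReal_sum_of_nonneg fun p _ =>
        gain_summand_nonneg hw ha hB _ p.1.succ_pos p.2.succ_pos]
    refine Finset.sum_congr rfl fun p _ => ?_
    rw [collRate, ← ENNReal.ofReal_mul ((hB _ _ (by omega) (by omega)).1 _)]
    simp only [mul_assoc]
  have hsum : ∑' n, ENNReal.ofReal (∑ k ∈ Finset.Ico 1 (m + 1 + 1 + n),
      f (m + 1 + 1 + n - k) k) =
      ∑' p, ENNReal.ofReal (B (p.1 + 1) (p.2 + 1) (m + 1)) * collRate a w τ p := by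
    rw [tsum_congr hterm]
    refine tsum_sum_antidiagonal_add m _ fun p hp => ?_
    rw [(hB _ _ (by omega) (by omega)).2.2.1 _ (by omega), ENNReal.ofReal_zero, zero_mul]
  rw [← hsum] at hfin ⊢
  rw [← ofReal_tsum_of_nonneg_of_ne_top (gainT_summand_nonneg hw ha hB (m + 1)) hfin,
    ← ENNReal.ofReal_ofNat 2, ← ENNReal.ofReal_mul zero_le_two, gainT]
  congr 1
  ring

lemma tsum_ofReal_lossT_le_and_two_mul_tsum_ofReal_gainT_le
    (hw : ∀ n : ℕ, 0 ≤ w (n + 1) τ) (ha : ∀ i j, 0 ≤ a i j) (hB : HB B) (h2 : H2 B)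
    (hW : ∑' p : ℕ × ℕ, ((p.1 + p.2 + 2 : ℕ) : ℝ≥0∞) * collRate a w τ p ≠ ∞) :
    ∑' m, ENNReal.ofReal (lossT a w (m + 1) τ) ≤ ∑' m, ENNReal.ofReal (gainT a B w (m + 1) τ) ∧
      2 * ∑' m, ENNReal.ofReal (gainT a B w (m + 1) τ) ≤
        ∑' p : ℕ × ℕ, ((p.1 + p.2 + 2 : ℕ) : ℝ≥0∞) * collRate a w τ p := by
  have hBc : ∀ m (p : ℕ × ℕ), ENNReal.ofReal (B (p.1 + 1) (p.2 + 1) (m + 1)) * collRate a w τ p ≤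
      ((p.1 + p.2 + 2 : ℕ) : ℝ≥0∞) * collRate a w τ p := fun m p =>
    mul_le_mul_left ((ENNReal.le_tsum m).trans (hB.tsum_ofReal_le p.1 p.2)) _
  have hc : ∀ p : ℕ × ℕ, collRate a w τ p ≤ ((p.1 + p.2 + 2 : ℕ) : ℝ≥0∞) * collRate a w τ p :=
    fun p => le_mul_of_one_le_left' (by exact_mod_cast (by omega : 1 ≤ p.1 + p.2 + 2))
  have hloss : ∑' m, ENNReal.ofReal (lossT a w (m + 1) τ) = ∑' p, collRate a w τ p := by
    rw [tsum_congr fun m => ofReal_lossT_eq hw ha m (ne_top_of_le_ne_top hW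
      ((ENNReal.tsum_comp_le_tsum_of_injective (Prod.mk_right_injective m) _).trans
        (ENNReal.tsum_le_tsum hc)))]
    exact ENNReal.tsum_prod.symm
  have hgain : 2 * ∑' m, ENNReal.ofReal (gainT a B w (m + 1) τ) =
      ∑' p, (∑' m, ENNReal.ofReal (B (p.1 + 1) (p.2 + 1) (m + 1))) * collRate a w τ p := by
    rw [← ENNReal.tsum_mul_left, tsum_congr fun m => two_mul_ofReal_gainT_eq hw ha hB m
      (ne_top_of_le_ne_top hW (ENNReal.tsum_le_tsum (hBc m))), ENNReal.tsum_comm]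
    exact tsum_congr fun p => ENNReal.tsum_mul_right
  constructor
  · rw [← ENNReal.mul_le_mul_iff_right two_ne_zero ENNReal.ofNat_ne_top, hloss, hgain,
      ← ENNReal.tsum_mul_left]
    exact ENNReal.tsum_le_tsum fun p => mul_le_mul_left (h2.two_le_tsum_ofReal hB p.1 p.2) _
  · rw [hgain]
    exact ENNReal.tsum_le_tsum fun p => mul_le_mul_left (hB.tsum_ofReal_le p.1 p.2) _

lemma tsum_weighted_collRate_le {K : ℝ} (hw : ∀ n : ℕ, 0 ≤ w (n + 1) τ)
    (haK : ∀ i j : ℕ, 1 ≤ i → 1 ≤ j → a i j ≤ K * i * j)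
    (hY1 : Summable fun n : ℕ => ((n + 1 : ℕ) : ℝ) ^ (1 : ℝ) * w (n + 1) τ)
    (hY2 : Summable fun n : ℕ => ((n + 1 : ℕ) : ℝ) ^ (2 : ℝ) * w (n + 1) τ) :
    ∑' p : ℕ × ℕ, ((p.1 + p.2 + 2 : ℕ) : ℝ≥0∞) * collRate a w τ p ≤
      2 * (ENNReal.ofReal K * ENNReal.ofReal (mom 1 fun i => w i τ) *
        ENNReal.ofReal (mom 2 fun i => w i τ)) := by
  set X : ℕ → ℝ≥0∞ := fun j => ENNReal.ofReal (((j + 1 : ℕ) : ℝ) ^ (2 : ℝ) * w (j + 1) τ)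
  set Y : ℕ → ℝ≥0∞ := fun j => ENNReal.ofReal (((j + 1 : ℕ) : ℝ) ^ (1 : ℝ) * w (j + 1) τ)
  have hX : ∑' j, X j = ENNReal.ofReal (mom 2 fun i => w i τ) :=
    (ENNReal.ofReal_tsum_of_nonneg (fun n => mul_nonneg (by positivity) (hw n)) hY2).symm
  have hY : ∑' j, Y j = ENNReal.ofReal (mom 1 fun i => w i τ) :=
    (ENNReal.ofReal_tsum_of_nonneg (fun n => mul_nonneg (by positivity) (hw n)) hY1).symm
  have hpair : ∀ p : ℕ × ℕ, ((p.1 + p.2 + 2 : ℕ) : ℝ≥0∞) * collRate a w τ p ≤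
      ENNReal.ofReal K * (X p.1 * Y p.2 + Y p.1 * X p.2) := by
    rintro ⟨j, k⟩
    have hj := hw j
    have hk := hw k
    simp only [collRate, X, Y]
    rw [← ENNReal.ofReal_natCast, ← ENNReal.ofReal_mul (by positivity),
      ← ENNReal.ofReal_mul (by positivity), ← ENNReal.ofReal_mul (by positivity),
      ← ENNReal.ofReal_add (by positivity) (by positivity),
      ← ENNReal.ofReal_mul' (by positivity)]
    refine ENNReal.ofReal_le_ofReal ?_
    have hajk := haK (j + 1) (k + 1) (by omega) (by omega)
    simp only [Real.rpow_one, Real.rpow_two]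
    push_cast at hajk ⊢
    calc ((j : ℝ) + k + 2) * (a (j + 1) (k + 1) * w (j + 1) τ * w (k + 1) τ)
        = ((j : ℝ) + k + 2) * (a (j + 1) (k + 1) * (w (j + 1) τ * w (k + 1) τ)) := by ring
      _ ≤ ((j : ℝ) + k + 2) * (K * (j + 1) * (k + 1) * (w (j + 1) τ * w (k + 1) τ)) := by
        gcongr
      _ = _ := by ring
  calc ∑' p : ℕ × ℕ, ((p.1 + p.2 + 2 : ℕ) : ℝ≥0∞) * collRate a w τ p
      ≤ ∑' p : ℕ × ℕ, ENNReal.ofReal K * (X p.1 * Y p.2 + Y p.1 * X p.2) :=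
        ENNReal.tsum_le_tsum hpair
    _ = ENNReal.ofReal K * ((∑' j, X j) * (∑' k, Y k) + (∑' j, Y j) * (∑' k, X k)) := by
        simp only [ENNReal.tsum_mul_left, ENNReal.tsum_prod', ENNReal.tsum_add,
          ENNReal.tsum_mul_right]
    _ = _ := by rw [hX, hY]; ring

lemma tsum_ofReal_lossT_le_and_tsum_ofReal_gainT_le {K : ℝ} (hw : ∀ n : ℕ, 0 ≤ w (n + 1) τ)
    (ha : ∀ i j, 0 ≤ a i j) (haK : ∀ i j : ℕ, 1 ≤ i → 1 ≤ j → a i j ≤ K * i * j)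
    (hB : HB B) (h2 : H2 B)
    (hY1 : Summable fun n : ℕ => ((n + 1 : ℕ) : ℝ) ^ (1 : ℝ) * w (n + 1) τ)
    (hY2 : Summable fun n : ℕ => ((n + 1 : ℕ) : ℝ) ^ (2 : ℝ) * w (n + 1) τ) :
    ∑' m, ENNReal.ofReal (lossT a w (m + 1) τ) ≤ ∑' m, ENNReal.ofReal (gainT a B w (m + 1) τ) ∧
      ∑' m, ENNReal.ofReal (gainT a B w (m + 1) τ) ≤ ENNReal.ofReal K *
        ENNReal.ofReal (mom 1 fun i => w i τ) * ENNReal.ofReal (mom 2 fun i => w i τ) := by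
  have hW := tsum_weighted_collRate_le hw haK hY1 hY2
  obtain ⟨hLG, hG⟩ :=
    tsum_ofReal_lossT_le_and_two_mul_tsum_ofReal_gainT_le hw ha hB h2
      (ne_top_of_le_ne_top (by finiteness) hW)
  exact ⟨hLG, (ENNReal.mul_le_mul_iff_right two_ne_zero ENNReal.ofNat_ne_top).mp (hG.trans hW)⟩

end CollisionBalance

section Solutions

variable {a : ℕ → ℕ → ℝ} {B : ℕ → ℕ → ℕ → ℝ} {win : ℕ → ℝ} {w : ℕ → ℝ → ℝ}

lemma IsSol.ofReal_add_lintegral_lossT_eq (hsol : IsSol a B win w) (ha : ∀ i j, 0 ≤ a i j)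
    (hB : HB B) {t : ℝ} (ht : 0 < t) (m : ℕ) :
    ENNReal.ofReal (w (m + 1) t) + ∫⁻ τ in Set.Ioc 0 t, ENNReal.ofReal (lossT a w (m + 1) τ) =
      ENNReal.ofReal (win (m + 1)) +
        ∫⁻ τ in Set.Ioc 0 t, ENNReal.ofReal (gainT a B w (m + 1) τ) := by
  obtain ⟨hpos, -, hinit, heq⟩ := hsol
  obtain ⟨hloss, hgain, hwt⟩ := heq (m + 1) m.succ_pos t ht
  have hw : ∀ τ ∈ Set.Ioc 0 t, ∀ n : ℕ, 0 ≤ w (n + 1) τ := fun τ hτ n =>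
    hpos _ n.succ_pos τ hτ.1.le
  have hloss0 : 0 ≤ᵐ[volume.restrict (Set.Ioc 0 t)] lossT a w (m + 1) :=
    (ae_restrict_iff' measurableSet_Ioc).mpr (ae_of_all _ fun τ hτ => lossT_nonneg (hw τ hτ) ha m)
  have hgain0 : 0 ≤ᵐ[volume.restrict (Set.Ioc 0 t)] gainT a B w (m + 1) :=
    (ae_restrict_iff' measurableSet_Ioc).mpr
      (ae_of_all _ fun τ hτ => gainT_nonneg (hw τ hτ) ha hB _)
  rw [← ofReal_integral_eq_lintegral_ofReal hloss hloss0,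
    ← ofReal_integral_eq_lintegral_ofReal hgain hgain0,
    ← ENNReal.ofReal_add (hpos _ m.succ_pos t ht.le) (integral_nonneg_of_ae hloss0),
    ← ENNReal.ofReal_add (hinit _ m.succ_pos ▸ hpos _ m.succ_pos 0 le_rfl)
      (integral_nonneg_of_ae hgain0), hwt, integral_sub hgain hloss]
  ring_nf

lemma IsSol.tsum_ofReal_le_of_balance (hsol : IsSol a B win w) (ha : ∀ i j, 0 ≤ a i j)
    (hB : HB B) {t : ℝ} (ht : 0 < t) {D : ℝ≥0∞} (hD : D ≠ ∞)
    (hbalance : ∀ τ ∈ Set.Ioc 0 t,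
      ∑' m, ENNReal.ofReal (lossT a w (m + 1) τ) ≤ ∑' m, ENNReal.ofReal (gainT a B w (m + 1) τ) ∧
        ∑' m, ENNReal.ofReal (gainT a B w (m + 1) τ) ≤ D) :
    ∑' n, ENNReal.ofReal (win (n + 1)) ≤ ∑' n, ENNReal.ofReal (w (n + 1) t) := by
  have hint := fun m : ℕ => hsol.2.2.2 (m + 1) m.succ_pos t ht
  have hae : ∀ᵐ τ ∂volume.restrict (Set.Ioc 0 t), τ ∈ Set.Ioc 0 t :=
    ae_restrict_mem measurableSet_Ioc
  set L := ∫⁻ τ in Set.Ioc 0 t, ∑' m, ENNReal.ofReal (lossT a w (m + 1) τ)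
  set G := ∫⁻ τ in Set.Ioc 0 t, ∑' m, ENNReal.ofReal (gainT a B w (m + 1) τ)
  have hLG : L ≤ G := lintegral_mono_ae (hae.mono fun τ hτ => (hbalance τ hτ).1)
  have hG : G ≠ ∞ := ne_top_of_le_ne_top (ENNReal.mul_ne_top hD measure_Ioc_lt_top.ne)
    ((lintegral_mono_ae (hae.mono fun τ hτ => (hbalance τ hτ).2)).trans_eq (setLIntegral_const _ _))
  have hsum : ∑' n, ENNReal.ofReal (w (n + 1) t) + L =
      ∑' n, ENNReal.ofReal (win (n + 1)) + G := by
    simp only [L, G]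
    rw [lintegral_tsum fun m => (hint m).1.aemeasurable.ennreal_ofReal,
      lintegral_tsum fun m => (hint m).2.1.aemeasurable.ennreal_ofReal,
      ← ENNReal.tsum_add, ← ENNReal.tsum_add]
    exact tsum_congr (hsol.ofReal_add_lintegral_lossT_eq ha hB ht)
  exact (ENNReal.add_le_add_iff_right hG).mp (by rw [← hsum]; gcongr)

lemma IsSol.mom_zero_le (hsol : IsSol a B win w) (hmc : MassConserving win w)
    (hloc : LocBddMoments w) (ha : ∀ i j, 0 ≤ a i j) {K : ℝ}
    (haK : ∀ i j : ℕ, 1 ≤ i → 1 ≤ j → a i j ≤ K * i * j) (hB : HB B) (h2 : H2 B)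
    {t : ℝ} (ht : 0 ≤ t) : mom 0 win ≤ mom 0 fun i => w i t := by
  have hw : ∀ τ, 0 ≤ τ → ∀ n : ℕ, 0 ≤ w (n + 1) τ := fun τ hτ n => hsol.1 _ n.succ_pos τ hτ
  have hY1 : ∀ τ, 0 ≤ τ → Summable fun n : ℕ => ((n + 1 : ℕ) : ℝ) ^ (1 : ℝ) * w (n + 1) τ :=
    fun τ hτ => (inY_iff_summable (y := fun i => w i τ) (hw τ hτ)).mp (hmc τ hτ).1
  have hinit : ∀ n : ℕ, w (n + 1) 0 = win (n + 1) := fun n => hsol.2.2.1 _ n.succ_pos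
  have hwin : mom 0 win = mom 0 fun i => w i 0 := by
    rw [mom_zero_eq_tsum, mom_zero_eq_tsum]
    exact tsum_congr fun n => (hinit n).symm
  rcases ht.eq_or_lt with rfl | htpos
  · exact hwin.le
  obtain ⟨C₂, hC₂⟩ := hloc 2 one_lt_two t htpos
  have hle := hsol.tsum_ofReal_le_of_balance ha hB htpos
    (D := ENNReal.ofReal K * ENNReal.ofReal (mom 1 win) * ENNReal.ofReal C₂) (by finiteness)
    fun τ hτ => by
      obtain ⟨hY2, hM2⟩ := hC₂ τ (Set.Ioc_subset_Icc_self hτ)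
      obtain ⟨hLG, hG⟩ := tsum_ofReal_lossT_le_and_tsum_ofReal_gainT_le (hw τ hτ.1.le) ha haK
        hB h2 (hY1 τ hτ.1.le) ((inY_iff_summable (hw τ hτ.1.le)).mp hY2)
      rw [(hmc τ hτ.1.le).2] at hG
      exact ⟨hLG, hG.trans (by gcongr)⟩
  rw [hwin, ← ENNReal.ofReal_le_ofReal_iff (mom_nonneg 0 (hw t ht)),
    ofReal_mom_zero_eq (y := fun i => w i 0) (hw 0 le_rfl) (hY1 0 le_rfl),
    ofReal_mom_zero_eq (y := fun i => w i t) (hw t ht) (hY1 t ht)]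
  simpa only [hinit] using hle

end Solutions

theorem stmt10_general (A α β : ℝ) (hA : 0 < A) (hβ1 : β ≤ 1) (hα1 : α < 1)
    (B : ℕ → ℕ → ℕ → ℝ) (hB : HB B) (h2 : H2 B)
    (win : ℕ → ℝ) (hpos : ∀ i, 1 ≤ i → 0 ≤ win i) (hY1 : inY 1 win)
    (ρ₀ ρ₁ : ℝ) (hρ₀ : 0 < ρ₀) (hρ : ρ₀ ≤ ρ₁)
    (hM1 : mom 1 win ≤ ρ₁) (hM0 : ρ₀ ≤ mom 0 win)
    (l₀ : ℕ)
    (htail : ∑' n : ℕ, win (l₀ + 1 + n) ≤ mom 0 win / 2)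
    (l : ℕ) (hl : l₀ ≤ l)
    (w : ℕ → ℝ → ℝ)
    (hsol : IsSol (kerTrunc A α β l) B (winTrunc l win) w)
    (hmc : MassConserving (winTrunc l win) w)
    (hloc : LocBddMoments w) :
    ∀ t : ℝ, 0 ≤ t →
      (mom 1 (fun i => w i t) = mom 1 (winTrunc l win) ∧ mom 1 (winTrunc l win) ≤ ρ₁) ∧
      (mom 0 (winTrunc l win) ≤ mom 0 (fun i => w i t) ∧
        ρ₀ / 2 ≤ mom 0 (winTrunc l win)) ∧
      (min (ρ₀ / 2) ((ρ₀ / 2) ^ (1 - α) * ρ₁ ^ α) ≤ mom α (fun i => w i t) ∧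
        0 < min (ρ₀ / 2) ((ρ₀ / 2) ^ (1 - α) * ρ₁ ^ α)) := by
  intro t ht
  have hwin : ∀ n : ℕ, 0 ≤ win (n + 1) := fun n => hpos _ n.succ_pos
  have hwt : ∀ n : ℕ, 0 ≤ w (n + 1) t := fun n => hsol.1 _ n.succ_pos t ht
  have hM1l : mom 1 (winTrunc l win) ≤ ρ₁ := (mom_one_winTrunc_le hpos hY1).trans hM1
  have hM0l : ρ₀ / 2 ≤ mom 0 (winTrunc l win) :=
    (div_le_div_of_nonneg_right hM0 zero_le_two).trans
      (half_mom_zero_le_mom_zero_winTrunc hpos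
        (summable_succ_of_summable_mom_one hwin ((inY_iff_summable hwin).mp hY1)) hl htail)
  have hmono : mom 0 (winTrunc l win) ≤ mom 0 fun i => w i t :=
    hsol.mom_zero_le hmc hloc (kerTrunc_nonneg hA.le α β l)
      (fun _ _ hi hj => kerTrunc_le hA.le hβ1 α l hi hj) hB h2 ht
  have hρ₁ : 0 < ρ₁ := hρ₀.trans_le hρ
  exact ⟨⟨(hmc t ht).2, hM1l⟩, ⟨hmono, hM0l⟩,
    min_le_mom_of_lt_one hα1 hwt ((inY_iff_summable hwt).mp (hmc t ht).1) (by positivity)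
      (hM0l.trans hmono) ((hmc t ht).2.le.trans hM1l), by positivity⟩

/-- Lemma 3.3: lower bounds for the moments of order `1`, `0` and `α` of the truncated
solutions. -/
theorem stmt10 (A α β : ℝ) (hA : 0 < A) (hαβ : α ≤ β) (hβ1 : β ≤ 1) (hβ0 : 0 < β) (hα1 : α < 1)
    (B : ℕ → ℕ → ℕ → ℝ) (hB : HB B) (h2 : H2 B)
    (win : ℕ → ℝ) (hpos : ∀ i, 1 ≤ i → 0 ≤ win i) (hY1 : inY 1 win)
    (hne : ∃ i, 1 ≤ i ∧ win i ≠ 0)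
    (ρ₀ ρ₁ : ℝ) (hρ₀ : 0 < ρ₀) (hρ : ρ₀ ≤ ρ₁)
    (hM1 : mom 1 win ≤ ρ₁) (hM0 : ρ₀ ≤ mom 0 win)
    (l₀ : ℕ) (hl₀ : 1 ≤ l₀)
    (htail : ∑' n : ℕ, win (l₀ + 1 + n) ≤ mom 0 win / 2)
    (l : ℕ) (hl : l₀ ≤ l)
    (w : ℕ → ℝ → ℝ)
    (hsol : IsSol (kerTrunc A α β l) B (winTrunc l win) w)
    (hmc : MassConserving (winTrunc l win) w)
    (hloc : LocBddMoments w) :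
    ∀ t : ℝ, 0 ≤ t →
      (mom 1 (fun i => w i t) = mom 1 (winTrunc l win) ∧ mom 1 (winTrunc l win) ≤ ρ₁) ∧
      (mom 0 (winTrunc l win) ≤ mom 0 (fun i => w i t) ∧
        ρ₀ / 2 ≤ mom 0 (winTrunc l win)) ∧
      (min (ρ₀ / 2) ((ρ₀ / 2) ^ (1 - α) * ρ₁ ^ α) ≤ mom α (fun i => w i t) ∧
        0 < min (ρ₀ / 2) ((ρ₀ / 2) ^ (1 - α) * ρ₁ ^ α)) :=
  stmt10_general A α β hA hβ1 hα1 B hB h2 win hpos hY1 ρ₀ ρ₁ hρ₀ hρ hM1 hM0 l₀ htail l hl w hsol hmc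
    hloc
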